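/- Let f : C → D be a map of lower n-triangular cochain complexes with components f_{l,k} : C^{k,q} → D^{l,q} (zero for k > l). If each diagonal component f_{k,k} : C^{k,*} → D^{k,*} is a quasi-isomorphism of cochain complexes, then f itself is a quasi-isomorphism. -/

import Mathlib

/-! Cochain complexes of `R`-modules are given elementwise: a family of modules `X q` (`q : ℤ`)
together with maps `dX q : X q →ₗ[R] X (q+1)`. -/

/-- A chain map `f` between (elementwise given) cochain complexes is a quasi-isomorphism:
it is surjective and injective on cohomology. -/
def IsQuasiIso (R : Type) [Ring R] (X Y : ℤ → Type)
    [∀ q, AddCommGroup (X q)] [∀ q, Module R (X q)]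
    [∀ q, AddCommGroup (Y q)] [∀ q, Module R (Y q)]
    (dX : ∀ q, X q →ₗ[R] X (q + 1)) (dY : ∀ q, Y q →ₗ[R] Y (q + 1))
    (f : ∀ q, X q →ₗ[R] Y q) : Prop :=
  (∀ (q : ℤ) (y : Y (q + 1)), dY (q + 1) y = 0 →
      ∃ x : X (q + 1), dX (q + 1) x = 0 ∧ ∃ u : Y q, y - f (q + 1) x = dY q u) ∧
  (∀ (q : ℤ) (x : X (q + 1)), dX (q + 1) x = 0 → (∃ u : Y q, f (q + 1) x = dY q u) →
      ∃ v : X q, dX q v = x)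


/-! A chain map is a quasi-isomorphism exactly when every cocycle `(w, r)` of its mapping cone is a
coboundary. For a lower triangular map the cone equation can be solved one row at a time: the
row `P` of a cone cocycle vanishing in the rows `k < P` is a cone cocycle of the diagonal map
`f P P`, and correcting row `P` does not disturb the rows `k < P`. -/

/-- A cocycle `(w, r)` of the mapping cone of `f` is a pair with `dX w = 0` and `f w = dY r`;
it is the coboundary of `(a, b)` when `dX a = w` and `f a + dY b = r`. -/
def ConeAcyclic (R : Type*) [Ring R] (X Y : ℤ → Type*)
    [∀ q, AddCommGroup (X q)] [∀ q, Module R (X q)]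
    [∀ q, AddCommGroup (Y q)] [∀ q, Module R (Y q)]
    (dX : ∀ q, X q →ₗ[R] X (q + 1)) (dY : ∀ q, Y q →ₗ[R] Y (q + 1))
    (f : ∀ q, X q →ₗ[R] Y q) : Prop :=
  ∀ (q : ℤ) (w : X (q + 1 + 1)) (r : Y (q + 1)), dX (q + 1 + 1) w = 0 →
    f (q + 1 + 1) w = dY (q + 1) r →
    ∃ (a : X (q + 1)) (b : Y q), dX (q + 1) a = w ∧ f (q + 1) a + dY q b = r

section Cone

variable {R : Type} [Ring R] {X Y : ℤ → Type}
    [∀ q, AddCommGroup (X q)] [∀ q, Module R (X q)]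
    [∀ q, AddCommGroup (Y q)] [∀ q, Module R (Y q)]
    {dX : ∀ q, X q →ₗ[R] X (q + 1)} {dY : ∀ q, Y q →ₗ[R] Y (q + 1)} {f : ∀ q, X q →ₗ[R] Y q}

theorem IsQuasiIso.coneAcyclic (h : IsQuasiIso R X Y dX dY f)
    (hf : ∀ q, (dY q).comp (f q) = (f (q + 1)).comp (dX q)) : ConeAcyclic R X Y dX dY f := by
  intro q w r hw hwr
  obtain ⟨v, hv⟩ := h.2 (q + 1) w hw ⟨r, hwr⟩
  have hcocycle : dY (q + 1) (r - f (q + 1) v) = 0 := by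
    rw [map_sub, ← LinearMap.comp_apply, hf, LinearMap.comp_apply, hv, hwr, sub_self]
  obtain ⟨x, hx, u, hu⟩ := h.1 q _ hcocycle
  refine ⟨v + x, u, by rw [map_add, hv, hx, add_zero], ?_⟩
  rw [map_add, ← hu]
  abel

theorem isQuasiIso_of_coneAcyclic (h : ConeAcyclic R X Y dX dY f) : IsQuasiIso R X Y dX dY f := by
  refine ⟨fun q y hy => ?_, fun q x hx ⟨u, hu⟩ => ?_⟩
  · obtain ⟨a, b, ha, hab⟩ := h q 0 y (map_zero _) (by rw [map_zero, hy])
    exact ⟨a, ha, b, sub_eq_of_eq_add' hab.symm⟩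
  · obtain ⟨q, rfl⟩ : ∃ q', q = q' + 1 := ⟨q - 1, by ring⟩
    obtain ⟨a, -, ha, -⟩ := h q x u hx hu
    exact ⟨a, ha⟩

theorem coneCocycle_sub_coboundary (hdX : ∀ q, (dX (q + 1)).comp (dX q) = 0)
    (hdY : ∀ q, (dY (q + 1)).comp (dY q) = 0)
    (hf : ∀ q, (dY q).comp (f q) = (f (q + 1)).comp (dX q))
    {q : ℤ} {w : X (q + 1 + 1)} {r : Y (q + 1)} (hw : dX (q + 1 + 1) w = 0)
    (hwr : f (q + 1 + 1) w = dY (q + 1) r) (a : X (q + 1)) (b : Y q) :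
    dX (q + 1 + 1) (w - dX (q + 1) a) = 0 ∧
      f (q + 1 + 1) (w - dX (q + 1) a) = dY (q + 1) (r - f (q + 1) a - dY q b) := by
  have hdXa := LinearMap.congr_fun (hdX (q + 1)) a
  have hdYb := LinearMap.congr_fun (hdY q) b
  have hfa := LinearMap.congr_fun (hf (q + 1)) a
  simp only [LinearMap.comp_apply, LinearMap.zero_apply] at hdXa hdYb hfa
  refine ⟨by rw [map_sub, hw, hdXa, sub_zero], ?_⟩
  rw [map_sub, map_sub, map_sub, hwr, hfa, hdYb, sub_zero]

end Cone

section Total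

variable {R : Type*} [Ring R] {n : ℕ} {L M N : Fin n → Type*}
    [∀ k, AddCommGroup (L k)] [∀ k, Module R (L k)]
    [∀ k, AddCommGroup (M k)] [∀ k, Module R (M k)]
    [∀ k, AddCommGroup (N k)] [∀ k, Module R (N k)]

def totalMap (g : ∀ l k, M k →ₗ[R] N l) : (∀ k, M k) →ₗ[R] ∀ l, N l :=
  LinearMap.pi fun l => ∑ k, (g l k).comp (LinearMap.proj k)

theorem totalMap_apply (g : ∀ l k, M k →ₗ[R] N l) (x : ∀ k, M k) (l : Fin n) :
    totalMap g x l = ∑ k, g l k (x k) := by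
  simp [totalMap, LinearMap.sum_apply]

theorem totalMap_zero : totalMap (fun _ _ => 0 : ∀ l k, M k →ₗ[R] N l) = 0 := by
  ext x l
  simp [totalMap_apply]

theorem totalMap_comp_totalMap (g : ∀ m l, M l →ₗ[R] N m) (h : ∀ l k, L k →ₗ[R] M l) :
    (totalMap g).comp (totalMap h) = totalMap fun m k => ∑ l, (g m l).comp (h l k) := by
  ext x m
  simp only [LinearMap.comp_apply, totalMap_apply, map_sum, LinearMap.sum_apply]
  exact Finset.sum_comm

theorem totalMap_single_apply (g : ∀ l k, M k →ₗ[R] N l) (k : Fin n)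
    (a : M k) (l : Fin n) : totalMap g (Pi.single k a) l = g l k a := by
  rw [totalMap_apply, Fintype.sum_eq_single k fun j hj => by rw [Pi.single_eq_of_ne hj, map_zero],
    Pi.single_eq_same]

theorem totalMap_apply_of_forall_lt {g : ∀ l k, M k →ₗ[R] N l} (hg : ∀ l k, l < k → g l k = 0)
    {x : ∀ k, M k} {P : Fin n} (hx : ∀ k < P, x k = 0) : totalMap g x P = g P P (x P) := by
  rw [totalMap_apply]
  refine Fintype.sum_eq_single P fun k hk => ?_
  rcases lt_or_gt_of_ne hk with hkP | hPk
  · rw [hx k hkP, map_zero]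
  · rw [hg P k hPk, LinearMap.zero_apply]

theorem sum_comp_eq_diag {g : ∀ m l, M l →ₗ[R] N m} {h : ∀ l k, L k →ₗ[R] M l}
    (hg : ∀ m l, m < l → g m l = 0) (hh : ∀ l k, l < k → h l k = 0) (k : Fin n) :
    ∑ l, (g k l).comp (h l k) = (g k k).comp (h k k) := by
  refine Fintype.sum_eq_single k fun l hl => ?_
  rcases lt_or_gt_of_ne hl with hlk | hkl
  · rw [hh l k hlk, LinearMap.comp_zero]
  · rw [hg k l hkl, LinearMap.zero_comp]

end Total

section LowerTriangular

variable {R : Type} [Ring R] {n : ℕ} {C D : Fin n → ℤ → Type}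
    [∀ p q, AddCommGroup (C p q)] [∀ p q, Module R (C p q)]
    [∀ p q, AddCommGroup (D p q)] [∀ p q, Module R (D p q)]
    {dC : ∀ (l k : Fin n) (q : ℤ), C k q →ₗ[R] C l (q + 1)}
    {dD : ∀ (l k : Fin n) (q : ℤ), D k q →ₗ[R] D l (q + 1)}
    {f : ∀ (l k : Fin n) (q : ℤ), C k q →ₗ[R] D l q}

theorem exists_coneCoboundary_eq_on_row
    (hCtri : ∀ l k q, l < k → dC l k q = 0) (hDtri : ∀ l k q, l < k → dD l k q = 0)
    (hftri : ∀ l k q, l < k → f l k q = 0)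
    (hdiag : ∀ k, ConeAcyclic R (fun q => C k q) (fun q => D k q)
      (fun q => dC k k q) (fun q => dD k k q) (fun q => f k k q))
    {q : ℤ} {w : ∀ k, C k (q + 1 + 1)} {r : ∀ k, D k (q + 1)}
    (hw : totalMap (dC · · (q + 1 + 1)) w = 0)
    (hwr : totalMap (f · · (q + 1 + 1)) w = totalMap (dD · · (q + 1)) r)
    {P : Fin n} (hlow : ∀ k < P, w k = 0 ∧ r k = 0) :
    ∃ (x : C P (q + 1)) (u : D P q), ∀ k ≤ P,
      (w - totalMap (dC · · (q + 1)) (Pi.single P x)) k = 0 ∧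
      (r - totalMap (f · · (q + 1)) (Pi.single P x) - totalMap (dD · · q) (Pi.single P u)) k = 0 := by
  have hwP : dC P P (q + 1 + 1) (w P) = 0 := by
    rw [← totalMap_apply_of_forall_lt (fun l k => hCtri l k _) fun k hk => (hlow k hk).1]
    exact congrFun hw P
  have hwrP : f P P (q + 1 + 1) (w P) = dD P P (q + 1) (r P) := by
    rw [← totalMap_apply_of_forall_lt (fun l k => hftri l k _) fun k hk => (hlow k hk).1,
      ← totalMap_apply_of_forall_lt (fun l k => hDtri l k _) fun k hk => (hlow k hk).2]
    exact congrFun hwr P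
  obtain ⟨x, u, hx, hxu⟩ : ∃ (x : C P (q + 1)) (u : D P q),
      dC P P (q + 1) x = w P ∧ f P P (q + 1) x + dD P P q u = r P :=
    hdiag P q (w P) (r P) hwP hwrP
  refine ⟨x, u, fun k hk => ?_⟩
  simp only [Pi.sub_apply, totalMap_single_apply]
  rcases hk.lt_or_eq with hkP | rfl
  · simp only [hCtri k P _ hkP, hDtri k P _ hkP, hftri k P _ hkP, LinearMap.zero_apply,
      sub_zero, hlow k hkP, and_self]
  · exact ⟨sub_eq_zero.2 hx.symm, by rw [sub_sub, sub_eq_zero, hxu]⟩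

theorem coneAcyclic_totalMap
    (hCtri : ∀ l k q, l < k → dC l k q = 0) (hDtri : ∀ l k q, l < k → dD l k q = 0)
    (hftri : ∀ l k q, l < k → f l k q = 0)
    (hCsq : ∀ (m k : Fin n) (q : ℤ), (∑ l, (dC m l (q + 1)).comp (dC l k q)) = 0)
    (hDsq : ∀ (m k : Fin n) (q : ℤ), (∑ l, (dD m l (q + 1)).comp (dD l k q)) = 0)
    (hfcomm : ∀ (m k : Fin n) (q : ℤ),
      (∑ l, (dD m l q).comp (f l k q)) = ∑ l, (f m l (q + 1)).comp (dC l k q))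
    (hdiag : ∀ k, ConeAcyclic R (fun q => C k q) (fun q => D k q)
      (fun q => dC k k q) (fun q => dD k k q) (fun q => f k k q)) :
    ConeAcyclic R (fun q => ∀ p, C p q) (fun q => ∀ p, D p q)
      (fun q => totalMap (dC · · q)) (fun q => totalMap (dD · · q))
      (fun q => totalMap (f · · q)) := by
  intro q w r hw hwr
  set dCt := fun q => totalMap (dC · · q)
  set dDt := fun q => totalMap (dD · · q)
  set ft := fun q => totalMap (f · · q)
  have hdCt : ∀ q, (dCt (q + 1)).comp (dCt q) = 0 := fun q => by
    simp only [dCt, totalMap_comp_totalMap, hCsq, totalMap_zero]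
  have hdDt : ∀ q, (dDt (q + 1)).comp (dDt q) = 0 := fun q => by
    simp only [dDt, totalMap_comp_totalMap, hDsq, totalMap_zero]
  have hft : ∀ q, (dDt q).comp (ft q) = (ft (q + 1)).comp (dCt q) := fun q => by
    simp only [dDt, ft, dCt, totalMap_comp_totalMap, hfcomm]
  suffices ∀ p : ℕ, ∃ (a : ∀ k, C k (q + 1)) (b : ∀ k, D k q), ∀ k : Fin n, (k : ℕ) < p →
      (w - dCt (q + 1) a) k = 0 ∧ (r - ft (q + 1) a - dDt q b) k = 0 by
    obtain ⟨a, b, hab⟩ := this n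
    have hw : w - dCt (q + 1) a = 0 := funext fun k => (hab k k.isLt).1
    have hr : r - ft (q + 1) a - dDt q b = 0 := funext fun k => (hab k k.isLt).2
    rw [sub_eq_zero] at hw
    rw [sub_sub, sub_eq_zero] at hr
    exact ⟨a, b, hw.symm, hr.symm⟩
  intro p
  induction p with
  | zero => exact ⟨0, 0, fun k hk => absurd hk (Nat.not_lt_zero _)⟩
  | succ p ih =>
    obtain ⟨a, b, hab⟩ := ih
    by_cases hp : p < n
    swap
    · exact ⟨a, b, fun k hk => hab k (by omega)⟩
    set P : Fin n := ⟨p, hp⟩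
    obtain ⟨hw', hwr'⟩ := coneCocycle_sub_coboundary hdCt hdDt hft hw hwr a b
    obtain ⟨x, u, hxu⟩ := exists_coneCoboundary_eq_on_row hCtri hDtri hftri hdiag hw' hwr'
      (P := P) hab
    refine ⟨a + Pi.single P x, b + Pi.single P u, fun k hk => ?_⟩
    have hwa : w - dCt (q + 1) (a + Pi.single P x) =
        w - dCt (q + 1) a - dCt (q + 1) (Pi.single P x) := by
      rw [map_add, sub_add_eq_sub_sub]
    have hrb : r - ft (q + 1) (a + Pi.single P x) - dDt q (b + Pi.single P u) =
        r - ft (q + 1) a - dDt q b - ft (q + 1) (Pi.single P x) - dDt q (Pi.single P u) := by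
      simp only [map_add]
      abel
    rw [hwa, hrb]
    exact hxu k (Nat.lt_succ_iff.1 hk)

end LowerTriangular

theorem lowerTriangular_quasiIso (R : Type) [Ring R] (n : ℕ)
    (C D : Fin n → ℤ → Type)
    [∀ p q, AddCommGroup (C p q)] [∀ p q, Module R (C p q)]
    [∀ p q, AddCommGroup (D p q)] [∀ p q, Module R (D p q)]
    (dC : ∀ (l k : Fin n) (q : ℤ), C k q →ₗ[R] C l (q + 1))
    (dD : ∀ (l k : Fin n) (q : ℤ), D k q →ₗ[R] D l (q + 1))
    (hCtri : ∀ l k q, l < k → dC l k q = 0)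
    (hDtri : ∀ l k q, l < k → dD l k q = 0)
    (hCsq : ∀ (m k : Fin n) (q : ℤ), (∑ l, (dC m l (q + 1)).comp (dC l k q)) = 0)
    (hDsq : ∀ (m k : Fin n) (q : ℤ), (∑ l, (dD m l (q + 1)).comp (dD l k q)) = 0)
    (f : ∀ (l k : Fin n) (q : ℤ), C k q →ₗ[R] D l q)
    (hftri : ∀ l k q, l < k → f l k q = 0)
    (hfcomm : ∀ (m k : Fin n) (q : ℤ),
      (∑ l, (dD m l q).comp (f l k q)) = ∑ l, (f m l (q + 1)).comp (dC l k q))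
    (hdiag : ∀ k : Fin n,
      IsQuasiIso R (fun q => C k q) (fun q => D k q)
        (fun q => dC k k q) (fun q => dD k k q) (fun q => f k k q)) :
    IsQuasiIso R (fun q => ∀ p, C p q) (fun q => ∀ p, D p q)
      (fun q => LinearMap.pi fun l => ∑ k, (dC l k q).comp (LinearMap.proj k))
      (fun q => LinearMap.pi fun l => ∑ k, (dD l k q).comp (LinearMap.proj k))
      (fun q => LinearMap.pi fun l => ∑ k, (f l k q).comp (LinearMap.proj k)) := by
  have hdiag_comm : ∀ k q, (dD k k q).comp (f k k q) = (f k k (q + 1)).comp (dC k k q) :=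
    fun k q => by
      simpa only [sum_comp_eq_diag (fun l k => hDtri l k q) (fun l k => hftri l k q),
        sum_comp_eq_diag (fun l k => hftri l k (q + 1)) (fun l k => hCtri l k q)] using
        hfcomm k k q
  exact isQuasiIso_of_coneAcyclic <| coneAcyclic_totalMap hCtri hDtri hftri hCsq hDsq hfcomm
    fun k => (hdiag k).coneAcyclic (hdiag_comm k)
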